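/- Let a > −1, let s be a positive integer and let n ≥ s be an integer. Then (−a−n)_s ≠ 0 and for all real t, J_n^{(a,−s)}(t) = ((−1)^s 2^s / (−a−n)_s) · A_{n−s}^{(a,s)} · P_n^{(a,−s)}(t), where P_n^{(a,−s)} is the Jacobi polynomial with parameters (a, −s) given by the defining hypergeometric sum. -/

import Mathlib

open MeasureTheory Finset

noncomputable section

/-- Pochhammer symbol `(x)_k`. -/
def poch (x : ℝ) (k : ℕ) : ℝ := (ascPochhammer ℝ k).eval x

/-- Jacobi polynomial `P_n^{(a,b)}` for real parameters. -/
def jacobiP (a b : ℝ) (n : ℕ) (t : ℝ) : ℝ :=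
  (poch (a + 1) n / (n.factorial : ℝ)) *
    ∑ k ∈ Finset.range (n + 1),
      poch (-(n : ℝ)) k * poch ((n : ℝ) + a + b + 1) k /
        ((k.factorial : ℝ) * poch (a + 1) k) * ((1 - t) / 2) ^ k

/-- Normalizing constant `A_n^{(a,b)}`. -/
def jacobiA (a b : ℝ) (n : ℕ) : ℝ := 2 ^ n / poch ((n : ℝ) + a + b + 1) n

/-- Normalized Jacobi polynomial `P̂_n^{(a,b)}`. -/
def jacobiPhat (a b : ℝ) (n : ℕ) (t : ℝ) : ℝ := jacobiA a b n * jacobiP a b n t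

/-- The polynomials `J_n^{(a-s,b-s)}` (defined from the parameters `a, b > -1`). -/
def jacobiJ (a b : ℝ) (s n : ℕ) (t : ℝ) : ℝ :=
  if n < s then (1 + t) ^ n / (n.factorial : ℝ)
  else ∫ u in (-1 : ℝ)..t, (t - u) ^ (s - 1) / ((s - 1).factorial : ℝ) * jacobiPhat a b (n - s) u

/-- The polynomials `J_n^{(a,-s)}`, built from `P̂^{(a+s,0)}`. -/
def jacobiJneg (a : ℝ) (s n : ℕ) (t : ℝ) : ℝ := jacobiJ (a + s) 0 s n t

lemma poch_zero (x : ℝ) : poch x 0 = 1 := by simp [poch]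

lemma poch_succ (x : ℝ) (k : ℕ) : poch x (k + 1) = poch x k * (x + k) := by
  simp [poch, ascPochhammer_succ_eval]

lemma poch_succ' (x : ℝ) (k : ℕ) : poch x (k + 1) = x * poch (x + 1) k := by
  induction k with
  | zero => simp [poch_succ, poch_zero]
  | succ k ih =>
      rw [poch_succ, ih, poch_succ]
      push_cast; ring

lemma poch_pos {x : ℝ} (hx : 0 < x) (k : ℕ) : 0 < poch x k := by
  induction k with
  | zero => simp [poch_zero]
  | succ k ih => rw [poch_succ]; positivity

lemma poch_prod (x : ℝ) (k : ℕ) : poch x k = ∏ i ∈ range k, (x + i) := by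
  induction k with
  | zero => simp [poch_zero]
  | succ k ih => rw [poch_succ, ih, Finset.prod_range_succ]

lemma poch_neg (x : ℝ) (k : ℕ) : poch (-x) k = (-1) ^ k * poch (x - k + 1) k := by
  induction k with
  | zero => simp [poch_zero]
  | succ k ih =>
      rw [poch_succ, ih]
      have : (x - (k+1:ℕ) + 1 : ℝ) = (x - k) := by push_cast; ring
      rw [this, poch_succ' (x - k) k]
      have : (x - k + 1 : ℝ) = x - k + 1 := rfl
      push_cast
      ring

lemma poch_nat_zero {m k : ℕ} (h : m < k) : poch (-(m:ℝ)) k = 0 := by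
  rw [poch_prod]
  exact Finset.prod_eq_zero (Finset.mem_range.2 h) (by push_cast; ring)

lemma poch_add (x : ℝ) (k m : ℕ) : poch x (k + m) = poch x k * poch (x + k) m := by
  induction m with
  | zero => simp [poch_zero]
  | succ m ih => rw [← add_assoc, poch_succ, ih, poch_succ]; push_cast; ring

lemma poch_neg_nat {n k : ℕ} (h : k ≤ n) :
    poch (-(n:ℝ)) k = (-1) ^ k * (k.factorial : ℝ) * (n.choose k) := by
  induction k with
  | zero => simp [poch_zero]
  | succ k ih =>
      have hk : k ≤ n := le_of_lt h
      rw [poch_succ, ih hk]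
      have h2 : (n.choose (k+1)) * (k+1) = n.choose k * (n - k) := Nat.choose_succ_right_eq n k
      have h3 := congrArg (Nat.cast (R := ℝ)) h2
      push_cast [Nat.cast_sub hk] at h3
      rw [Nat.factorial_succ]
      push_cast
      linear_combination ((-1:ℝ)^k * (k.factorial:ℝ)) * h3


lemma vandermonde : ∀ (n : ℕ) (b c : ℝ),
    ∑ k ∈ Finset.range (n+1),
      (-1:ℝ)^k * (n.choose k) * poch b k * poch (c + k) (n - k) = poch (c - b) n := by
  intro n
  induction n with
  | zero => intro b c; simp [poch_zero]
  | succ n ih =>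
      intro b c
      set f : ℕ → ℝ := fun k => (-1:ℝ)^k * ((n+1).choose k) * poch b k * poch (c+k) (n+1-k) with hf
      set t : ℕ → ℝ := fun k => (-1:ℝ)^k * (n.choose k) * poch b k * poch (c+k) (n+1-k) with ht
      set u : ℕ → ℝ := fun k => (-1:ℝ)^(k+1) * (n.choose k) * poch b (k+1) * poch (c+k+1) (n-k) with hu
      have step1 : ∑ k ∈ Finset.range (n+2), f k
          = ∑ k ∈ Finset.range (n+2), t k + ∑ k ∈ Finset.range (n+1), u k := by
        rw [Finset.sum_range_succ' f, Finset.sum_range_succ' t]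
        have : ∀ k ∈ Finset.range (n+1), f (k+1) = t (k+1) + u k := by
          intro k hk
          simp only [hf, ht, hu, Nat.choose_succ_succ']
          have h1 : n + 1 - (k+1) = n - k := by omega
          rw [h1]
          push_cast
          ring
        rw [Finset.sum_congr rfl this, Finset.sum_add_distrib]
        have hf0 : f 0 = t 0 := by simp [hf, ht]
        rw [hf0]; ring
      have step2 : ∑ k ∈ Finset.range (n+2), t k = ∑ k ∈ Finset.range (n+1), t k := by
        rw [Finset.sum_range_succ]
        have : t (n+1) = 0 := by simp [ht, Nat.choose_succ_self]
        rw [this, add_zero]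
      have step3 : ∀ k ∈ Finset.range (n+1), t k + u k
          = (c - b) * ((-1:ℝ)^k * (n.choose k) * poch b k * poch ((c+1) + k) (n - k)) := by
        intro k hk
        have hkn : k ≤ n := by simpa using Nat.lt_succ_iff.mp (Finset.mem_range.mp hk)
        have h1 : n + 1 - k = (n - k) + 1 := by omega
        simp only [ht, hu, h1]
        rw [poch_succ' (c + k) (n-k), poch_succ b k]
        have : (c + 1 + k : ℝ) = c + k + 1 := by ring
        rw [this]
        push_cast
        ring
      calc ∑ k ∈ Finset.range (n+2), f k
          = ∑ k ∈ Finset.range (n+1), (t k + u k) := by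
            rw [step1, step2, Finset.sum_add_distrib]
        _ = (c - b) * ∑ k ∈ Finset.range (n+1),
              (-1:ℝ)^k * (n.choose k) * poch b k * poch ((c+1) + k) (n - k) := by
            rw [Finset.sum_congr rfl step3, Finset.mul_sum]
        _ = (c - b) * poch (c + 1 - b) n := by rw [ih b (c+1)]
        _ = poch (c - b) (n+1) := by
            rw [poch_succ' (c-b) n]
            ring_nf

lemma jacobiP_neg_one (α β : ℝ) (hα : -1 < α) (n : ℕ) :
    jacobiP α β n (-1) = poch (-(n:ℝ) - β) n / (n.factorial : ℝ) := by
  have hpos : ∀ k, (0:ℝ) < poch (α+1) k := fun k => poch_pos (by linarith) k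
  unfold jacobiP
  have key : ∑ k ∈ Finset.range (n+1),
      poch (-(n:ℝ)) k * poch ((n:ℝ)+α+β+1) k / ((k.factorial : ℝ) * poch (α+1) k)
        * ((1 - (-1:ℝ))/2)^k * poch (α+1) n
      = poch (-(n:ℝ) - β) n := by
    have hv := vandermonde n ((n:ℝ)+α+β+1) (α+1)
    have harg : (α + 1 - ((n:ℝ)+α+β+1)) = -(n:ℝ) - β := by ring
    rw [harg] at hv
    rw [← hv]
    apply Finset.sum_congr rfl
    intro k hk
    have hkn : k ≤ n := Nat.lt_succ_iff.mp (Finset.mem_range.mp hk)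
    have hsplit : poch (α+1) n = poch (α+1) k * poch (α+1+k) (n-k) := by
      have h := poch_add (α+1) k (n-k)
      rwa [Nat.add_sub_cancel' hkn] at h
    rw [poch_neg_nat hkn, hsplit]
    have h1 : ((1 - (-1:ℝ))/2) = 1 := by norm_num
    rw [h1, one_pow]
    have hk0 : (k.factorial : ℝ) ≠ 0 := Nat.cast_ne_zero.2 k.factorial_ne_zero
    have hp : poch (α+1) k ≠ 0 := ne_of_gt (hpos k)
    field_simp
  rw [div_mul_eq_mul_div, mul_comm, Finset.sum_mul, key]

lemma jacobiP_continuous (α β : ℝ) (n : ℕ) : Continuous (fun t => jacobiP α β n t) := by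
  unfold jacobiP
  fun_prop

set_option maxHeartbeats 1000000 in
lemma jacobiP_hasDerivAt (α β : ℝ) (hα : -1 < α) (m : ℕ) (t : ℝ) :
    HasDerivAt (fun x => jacobiP α β (m+1) x)
      ((((m:ℝ)+1)+α+β+1)/2 * jacobiP (α+1) (β+1) m t) t := by
  have hane : (α + 1) ≠ 0 := by linarith
  have hpos : ∀ k, poch (α+2) k ≠ 0 := fun k => ne_of_gt (poch_pos (by linarith) k)
  have hbase : HasDerivAt (fun x : ℝ => (1-x)/2) ((-1)/2) t :=
    HasDerivAt.div_const ((hasDerivAt_id t).const_sub 1) 2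
  have hterm : ∀ k : ℕ, HasDerivAt (fun x : ℝ => ((1-x)/2)^k)
      ((k:ℝ) * ((1-t)/2)^(k-1) * ((-1)/2)) t := fun k => hbase.pow k
  have hsum : HasDerivAt (fun x => jacobiP α β (m+1) x)
      (poch (α+1) (m+1) / (((m+1).factorial : ℕ) : ℝ) *
        ∑ k ∈ Finset.range (m+2),
          poch (-((m+1:ℕ):ℝ)) k * poch (((m+1:ℕ):ℝ) + α + β + 1) k /
            ((k.factorial : ℝ) * poch (α+1) k) * ((k:ℝ) * ((1-t)/2)^(k-1) * ((-1)/2))) t := by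
    unfold jacobiP
    exact HasDerivAt.const_mul _ (HasDerivAt.fun_sum (fun k _ => (hterm k).const_mul _))
  convert hsum using 1
  rw [Finset.sum_range_succ' _ (m+1)]
  have h0 : poch (-((m+1:ℕ):ℝ)) 0 * poch (((m+1:ℕ):ℝ) + α + β + 1) 0 /
      ((Nat.factorial 0 : ℝ) * poch (α+1) 0) * (((0:ℕ):ℝ) * ((1-t)/2)^(0-1) * ((-1)/2)) = 0 := by
    simp
  rw [h0, add_zero]
  unfold jacobiP
  have h12 : α + 1 + 1 = α + 2 := by ring
  rw [h12, Finset.mul_sum, Finset.mul_sum, Finset.mul_sum]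
  apply Finset.sum_congr rfl
  intro k hk
  have e1 : poch (α+1) (m+1) = (α+1) * poch (α+2) m := by
    rw [poch_succ', h12]
  have e2 : poch (-((m+1:ℕ):ℝ)) (k+1) = (-((m:ℝ)+1)) * poch (-(m:ℝ)) k := by
    rw [poch_succ']
    have h : (-((m+1:ℕ):ℝ)) + 1 = -(m:ℝ) := by push_cast; ring
    rw [h]; push_cast; ring
  have e3 : poch (((m+1:ℕ):ℝ) + α + β + 1) (k+1)
      = (((m:ℝ)+1) + α + β + 1) * poch ((m:ℝ) + (α+1) + (β+1) + 1) k := by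
    rw [poch_succ']
    have h : ((m+1:ℕ):ℝ) + α + β + 1 + 1 = (m:ℝ) + (α+1) + (β+1) + 1 := by push_cast; ring
    rw [h]
    push_cast; ring
  have e4 : poch (α+1) (k+1) = (α+1) * poch (α+2) k := by
    rw [poch_succ', h12]
  have e5 : (((m+1).factorial : ℕ) : ℝ) = ((m:ℝ)+1) * (m.factorial : ℝ) := by
    rw [Nat.factorial_succ]; push_cast; ring
  have e6 : ((k+1).factorial : ℝ) = ((k:ℝ)+1) * (k.factorial : ℝ) := by
    rw [Nat.factorial_succ]; push_cast; ring
  have e7 : (k + 1) - 1 = k := rfl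
  rw [e1, e2, e3, e4, e5, e6, e7]
  have hm0 : (m.factorial : ℝ) ≠ 0 := Nat.cast_ne_zero.2 m.factorial_ne_zero
  have hk0 : (k.factorial : ℝ) ≠ 0 := Nat.cast_ne_zero.2 k.factorial_ne_zero
  have hk1 : ((k:ℝ)+1) ≠ 0 := by positivity
  have hm1 : ((m:ℝ)+1) ≠ 0 := by positivity
  have hp2 : poch (α+2) k ≠ 0 := hpos k
  have hp2m : poch (α+2) m ≠ 0 := hpos m
  push_cast
  field_simp



def Phi (a : ℝ) (s n j : ℕ) (t : ℝ) : ℝ :=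
  ((-1:ℝ)^s * 2^s / poch (-a - (n:ℝ)) s * jacobiA a (s:ℝ) (n-s))
    * (poch ((n:ℝ) + a - s + 1) j / 2^j) * jacobiP (a + j) ((j:ℝ) - s) (n - j) t

section PhiLemmas
variable {a : ℝ} {s n : ℕ} (ha : -1 < a) (hs : 1 ≤ s) (hn : s ≤ n)

include ha hn in
lemma poch_neg_ne : poch (-a - (n:ℝ)) s ≠ 0 := by
  have h : (-a - (n:ℝ)) = -(a + n) := by ring
  rw [h, poch_neg]
  have hpos : (0:ℝ) < a + (n:ℝ) - (s:ℝ) + 1 := by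
    have : (s:ℝ) ≤ (n:ℝ) := by exact_mod_cast hn
    linarith
  exact mul_ne_zero (by positivity) (ne_of_gt (poch_pos hpos s))

include ha hn in
lemma Phi_cont (j : ℕ) : Continuous (Phi a s n j) := by
  unfold Phi
  exact (continuous_const.mul continuous_const).mul (jacobiP_continuous _ _ _)

include ha hs hn in
lemma Phi_neg_one {j : ℕ} (hj : j < s) : Phi a s n j (-1) = 0 := by
  have haj : -1 < a + (j:ℕ) := by
    have : (0:ℝ) ≤ (j:ℝ) := Nat.cast_nonneg j
    linarith
  unfold Phi
  rw [jacobiP_neg_one _ _ haj]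
  have harg : -(((n - j : ℕ)):ℝ) - ((j:ℝ) - s) = (s:ℝ) - (n:ℝ) := by
    rw [Nat.cast_sub (le_trans (le_of_lt hj) hn)]
    ring
  rw [harg]
  have hz : poch ((s:ℝ) - (n:ℝ)) (n - j) = 0 := by
    have h1 : ((s:ℝ) - (n:ℝ)) = -(((n - s : ℕ)):ℝ) := by
      rw [Nat.cast_sub hn]; ring
    rw [h1]
    exact poch_nat_zero (by omega)
  rw [hz]
  simp

include ha hn in
lemma Phi_deriv {j : ℕ} (hj : j < s) (t : ℝ) :
    HasDerivAt (Phi a s n j) (Phi a s n (j+1) t) t := by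
  have hjn : j < n := lt_of_lt_of_le hj hn
  have haj : -1 < a + (j:ℕ) := by
    have : (0:ℝ) ≤ (j:ℝ) := Nat.cast_nonneg j
    linarith
  set c : ℝ := ((-1:ℝ)^s * 2^s / poch (-a - (n:ℝ)) s * jacobiA a (s:ℝ) (n-s))
    * (poch ((n:ℝ) + a - s + 1) j / 2^j) with hc
  have hD := (jacobiP_hasDerivAt (a + j) ((j:ℝ) - s) haj (n - j - 1) t).const_mul c
  have hfun : Phi a s n j = fun x => c * jacobiP (a + j) ((j:ℝ) - s) ((n - j - 1) + 1) x := by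
    funext x
    unfold Phi
    rw [show (n - j - 1) + 1 = n - j by omega]
  rw [hfun]
  refine hD.congr_deriv ?_
  symm
  unfold Phi
  have e1 : (((n - j - 1 : ℕ)):ℝ) + 1 = (n:ℝ) - j := by
    rw [Nat.cast_sub (by omega : 1 ≤ n - j), Nat.cast_sub (le_of_lt hjn)]
    push_cast; ring
  have e2 : a + (j:ℝ) + 1 = a + ((j+1:ℕ):ℝ) := by push_cast; ring
  have e3 : (j:ℝ) - s + 1 = ((j+1:ℕ):ℝ) - s := by push_cast; ring
  have e4 : n - j - 1 = n - (j+1) := by omega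
  rw [e1, e2, e3, e4, hc]
  rw [poch_succ ((n:ℝ) + a - s + 1) j]
  have h2 : (2:ℝ)^(j+1) = 2^j * 2 := by ring
  rw [h2]
  have harg : (n:ℝ) + a - s + 1 + j = (n:ℝ) - j + (a + j) + ((j:ℝ) - s) + 1 := by ring
  field_simp
  ring

include ha hs hn in
lemma Phi_s (u : ℝ) : Phi a s n s u = jacobiPhat (a + s) 0 (n - s) u := by
  unfold Phi jacobiPhat
  have e0 : (s:ℝ) - s = 0 := by ring
  have e1 : a + (s:ℕ) = a + (s:ℝ) := rfl
  rw [e0]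
  have hAeq : jacobiA a (s:ℝ) (n-s) = jacobiA (a + s) 0 (n-s) := by
    unfold jacobiA
    have : (((n - s:ℕ)):ℝ) + a + s + 1 = (((n - s:ℕ)):ℝ) + (a + s) + 0 + 1 := by ring
    rw [this]
  have hpoch : poch (-a - (n:ℝ)) s = (-1:ℝ)^s * poch ((n:ℝ) + a - s + 1) s := by
    have h : (-a - (n:ℝ)) = -(a + n) := by ring
    rw [h, poch_neg]
    have : a + (n:ℝ) - s + 1 = (n:ℝ) + a - s + 1 := by ring
    rw [this]
  have hppos : (0:ℝ) < poch ((n:ℝ) + a - s + 1) s := by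
    apply poch_pos
    have : (s:ℝ) ≤ (n:ℝ) := by exact_mod_cast hn
    linarith
  rw [hpoch, hAeq]
  have h1 : ((-1:ℝ)^s * 2^s / ((-1:ℝ)^s * poch ((n:ℝ) + a - s + 1) s) * jacobiA (a + s) 0 (n-s))
      * (poch ((n:ℝ) + a - s + 1) s / 2^s) = jacobiA (a + s) 0 (n-s) := by
    have hne : poch ((n:ℝ) + a - s + 1) s ≠ 0 := ne_of_gt hppos
    have h2 : ((-1:ℝ))^s ≠ 0 := by positivity
    field_simp
  rw [h1]

end PhiLemmas


lemma integral_chain {a : ℝ} {s n : ℕ} (ha : -1 < a) (hs : 1 ≤ s) (hn : s ≤ n) :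
    ∀ j, 1 ≤ j → j ≤ s → ∀ t : ℝ,
      (∫ u in (-1:ℝ)..t, (t - u) ^ (j-1) / ((j-1).factorial : ℝ) * Phi a s n j u)
        = Phi a s n 0 t := by
  intro j hj
  induction j, hj using Nat.le_induction with
  | base =>
      intro h1 t
      have hFTC := intervalIntegral.integral_eq_sub_of_hasDerivAt
        (f := Phi a s n 0) (f' := Phi a s n 1)
        (fun x _ => Phi_deriv ha hn (by omega) x)
        (((Phi_cont ha hn 1)).intervalIntegrable (-1) t)
      have h0 : Phi a s n 0 (-1) = 0 := Phi_neg_one ha hs hn (by omega)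
      simp only [show (1:ℕ)-1 = 0 from rfl, pow_zero, Nat.factorial_zero, Nat.cast_one,
        div_one, one_mul]
      calc (∫ u in (-1:ℝ)..t, Phi a s n 1 u) = Phi a s n 0 t - Phi a s n 0 (-1) := hFTC
        _ = Phi a s n 0 t := by rw [h0, sub_zero]
  | succ j hj ih =>
      intro hjs t
      have hjs' : j ≤ s := by omega
      have hjlt : j < s := by omega
      obtain ⟨i, rfl⟩ : ∃ i, j = i + 1 := ⟨j - 1, by omega⟩
      -- integration by parts
      have hu : ∀ x ∈ Set.uIcc (-1:ℝ) t,
          HasDerivAt (fun y => (t - y) ^ (i+1) / ((i+1).factorial : ℝ))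
            (-((t - x) ^ i / (i.factorial : ℝ))) x := by
        intro x _
        have hb : HasDerivAt (fun y : ℝ => t - y) (-1) x := (hasDerivAt_id x).const_sub t
        have hp := (hb.pow (i+1)).div_const ((i+1).factorial : ℝ)
        refine hp.congr_deriv ?_
        symm
        rw [Nat.factorial_succ]
        have h1 : ((i+1) * i.factorial : ℕ) = (i+1) * (i.factorial) := rfl
        push_cast
        have hfac : (i.factorial : ℝ) ≠ 0 := Nat.cast_ne_zero.2 i.factorial_ne_zero
        field_simp
      have hv : ∀ x ∈ Set.uIcc (-1:ℝ) t,
          HasDerivAt (Phi a s n (i+1)) (Phi a s n (i+2) x) x :=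
        fun x _ => Phi_deriv ha hn (by omega) x
      have hint1 : IntervalIntegrable (fun x => -((t - x) ^ i / (i.factorial : ℝ)))
          MeasureTheory.volume (-1) t := by
        apply Continuous.intervalIntegrable
        fun_prop
      have hint2 : IntervalIntegrable (Phi a s n (i+2)) MeasureTheory.volume (-1) t :=
        (Phi_cont ha hn (i+2)).intervalIntegrable (-1) t
      have hparts := intervalIntegral.integral_mul_deriv_eq_deriv_mul hu hv hint1 hint2
      have e1 : (i + 1 + 1) - 1 = i + 1 := rfl
      rw [e1, hparts]
      have hz1 : (t - t) ^ (i+1) / (((i+1).factorial : ℕ) : ℝ) = 0 := by simp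
      have hz2 : Phi a s n (i+1) (-1) = 0 := Phi_neg_one ha hs hn (by omega)
      have hneg : (∫ x in (-1:ℝ)..t, -((t - x) ^ i / (i.factorial : ℝ)) * Phi a s n (i+1) x)
          = -∫ x in (-1:ℝ)..t, (t - x) ^ i / (i.factorial : ℝ) * Phi a s n (i+1) x := by
        rw [← intervalIntegral.integral_neg]
        congr 1
        funext x
        ring
      rw [hz1, hz2, zero_mul, mul_zero, hneg]
      simp only [Nat.add_sub_cancel] at ih
      rw [ih hjs' t]
      ring


/-- `J_n^{(a,-s)}` as a multiple of the Jacobi polynomial `P_n^{(a,-s)}`. -/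
theorem jacobiJneg_eq_jacobiP (a : ℝ) (ha : -1 < a) (s : ℕ) (hs : 1 ≤ s) (n : ℕ) (hn : s ≤ n) :
    poch (-a - n) s ≠ 0 ∧
    ∀ t : ℝ, jacobiJneg a s n t
      = (-1 : ℝ) ^ s * 2 ^ s / poch (-a - n) s * jacobiA a (s : ℝ) (n - s)
          * jacobiP a (-(s : ℝ)) n t := by
  refine ⟨poch_neg_ne ha hn, ?_⟩
  intro t
  have hmain := integral_chain ha hs hn s hs le_rfl t
  unfold jacobiJneg jacobiJ
  rw [if_neg (by omega : ¬ n < s)]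
  have hint : (∫ u in (-1:ℝ)..t, (t - u) ^ (s-1) / ((s-1).factorial : ℝ) * jacobiPhat (a + s) 0 (n - s) u)
      = ∫ u in (-1:ℝ)..t, (t - u) ^ (s-1) / ((s-1).factorial : ℝ) * Phi a s n s u := by
    congr 1
    funext u
    rw [Phi_s ha hs hn u]
  rw [hint, hmain]
  unfold Phi
  rw [poch_zero]
  norm_num

end
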